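/- arXiv:2407.16872 — 2 statements merged into one kernel-verified Lean document; each statement's English description precedes it below -/
import Mathlib

section
/- Let N ≥ 2 be an integer, set h = 1/(N−1) and x_i = (i−1)·h for i = 1, …, N, let φ_{x_i}(x) = (1/h)·ReLU(x − x_i + h) − (2/h)·ReLU(x − x_i) + (1/h)·ReLU(x − x_i − h), let y₁, …, y_N ∈ ℝ, let b ∈ [0, 1), and define f₂(x) = Σ_{i=1}^{N} y_i · ReLU(φ_{x_i}(x) − b)/(1 − b). Then: (i) f₂(x_i) = y_i for every i = 1, …, N; and (ii) f₂(x) = 0 for every x ∈ ℝ with min_i |x − x_i| ≥ (1 − b)·h. -/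
noncomputable def relu (x : ℝ) : ℝ := max x 0

/-- The one-dimensional ReLU hat function of half-width `h` centered at `t`. -/
noncomputable def hat (h t x : ℝ) : ℝ :=
  (1 / h) * relu (x - t + h) - (2 / h) * relu (x - t) + (1 / h) * relu (x - t - h)

lemma hat_eq {h : ℝ} (hh : 0 < h) (t x : ℝ) :
    hat h t x = max (1 - |x - t| / h) 0 := by
  have hne := hh.ne'
  unfold hat relu
  rcases le_total (x - t) 0 with h0 | h0
  · rw [abs_of_nonpos h0]
    rcases le_total (x - t) (-h) with h1 | h1
    · rw [max_eq_right (by linarith), max_eq_right (by linarith),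
        max_eq_right (by linarith), max_eq_right (by
          have : (-(x - t)) / h ≥ 1 := by rw [ge_iff_le, le_div_iff₀ hh]; linarith
          linarith)]
      ring
    · rw [max_eq_left (by linarith), max_eq_right h0, max_eq_right (by linarith),
        max_eq_left (by
          have : (-(x - t)) / h ≤ 1 := by rw [div_le_iff₀ hh]; linarith
          linarith)]
      field_simp
      ring
  · rw [abs_of_nonneg h0]
    rcases le_total (x - t) h with h1 | h1
    · rw [max_eq_left (by linarith), max_eq_left h0, max_eq_right (by linarith),
        max_eq_left (by
          have : (x - t) / h ≤ 1 := by rw [div_le_iff₀ hh]; linarith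
          linarith)]
      field_simp
      ring
    · rw [max_eq_left (by linarith), max_eq_left h0, max_eq_left (by linarith),
        max_eq_right (by
          have : (x - t) / h ≥ 1 := by rw [ge_iff_le, le_div_iff₀ hh]; linarith
          linarith)]
      ring

/-- 1-D function-approximation network: exact interpolation of the
training data yet identically 0 away from the training points. -/
theorem stmt_5 (N : ℕ) (hN : 2 ≤ N)
    (h : ℝ) (hh : h = 1 / ((N : ℝ) - 1))
    (x : ℕ → ℝ) (hx : ∀ i, x i = ((i : ℝ) - 1) * h)
    (y : ℕ → ℝ) (b : ℝ) (hb : 0 ≤ b ∧ b < 1)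
    (f₂ : ℝ → ℝ)
    (hf : ∀ t, f₂ t = ∑ i ∈ Finset.Icc 1 N, y i * (relu (hat h (x i) t - b) / (1 - b))) :
    (∀ i ∈ Finset.Icc 1 N, f₂ (x i) = y i) ∧
    (∀ t : ℝ, (∀ i ∈ Finset.Icc 1 N, (1 - b) * h ≤ |t - x i|) → f₂ t = 0) := by
  obtain ⟨hb0, hb1⟩ := hb
  have hN1 : (1:ℝ) ≤ (N:ℝ) - 1 := by
    have : (2:ℝ) ≤ (N:ℝ) := by exact_mod_cast hN
    linarith
  have hh0 : 0 < h := by rw [hh]; positivity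
  constructor
  · intro i hi
    rw [hf]
    rw [Finset.sum_eq_single i]
    · rw [hat_eq hh0, sub_self, abs_zero, zero_div, sub_zero, max_eq_left (by norm_num)]
      unfold relu
      rw [max_eq_left (by linarith)]
      rw [div_self (by linarith : (1:ℝ) - b ≠ 0), mul_one]
    · intro j hj hji
      have hd : x i - x j = ((i:ℝ) - (j:ℝ)) * h := by rw [hx, hx]; ring
      have h1 : (1:ℝ) ≤ |(i:ℝ) - (j:ℝ)| := by
        have : ((i:ℤ) - j) ≠ 0 := sub_ne_zero.mpr (by exact_mod_cast hji.symm)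
        have := Int.one_le_abs this
        push_cast at this ⊢
        exact_mod_cast this
      have habs : h ≤ |x i - x j| := by
        rw [hd, abs_mul, abs_of_pos hh0]
        nlinarith
      rw [hat_eq hh0]
      have : 1 - |x i - x j| / h ≤ 0 := by
        have : 1 ≤ |x i - x j| / h := by rw [le_div_iff₀ hh0]; linarith
        linarith
      rw [max_eq_right this]
      unfold relu
      rw [max_eq_right (by linarith)]
      simp
    · intro hni
      exact absurd hi hni
  · intro t ht
    rw [hf]
    apply Finset.sum_eq_zero
    intro i hi
    have := ht i hi
    rw [hat_eq hh0]
    have hle : max (1 - |t - x i| / h) 0 ≤ b := by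
      apply max_le _ hb0
      have : (1 - b) ≤ |t - x i| / h := by rw [le_div_iff₀ hh0]; linarith
      linarith
    unfold relu
    rw [max_eq_right (by linarith)]
    simp
end

section
/- Let N ≥ 2 be an integer, set h = 1/(N−1) and x_i = y_i = (i−1)·h for i = 1, …, N, let φ_t denote the ReLU hat function of half-width h centered at t, let z_{i,j} ∈ ℝ for 1 ≤ i, j ≤ N, let b ∈ [1, 2), and define Φ_{i,j}(x, y) = φ_{x_i}(x) + φ_{y_j}(y) and f₂(x, y) = Σ_{i,j=1}^{N} z_{i,j} · ReLU(Φ_{i,j}(x, y) − b)/(2 − b). Then: (i) f₂(x_i, y_j) = z_{i,j} for all i, j; and (ii) f₂(x, y) = 0 for every (x, y) ∈ ℝ² whose sup-norm distance to the grid {(x_i, y_j) : 1 ≤ i, j ≤ N} is at least (2 − b)·h. -/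
lemma hat_formula (h t x : ℝ) (hh : 0 < h) : hat h t x = max (1 - |x - t| / h) 0 := by
  unfold hat relu
  rcases le_or_gt x t with hxt | hxt
  · rw [abs_of_nonpos (by linarith)]
    rcases le_or_gt (x - t + h) 0 with h1 | h1
    · rw [max_eq_right h1, max_eq_right (by linarith : x - t ≤ 0),
        max_eq_right (by linarith : x - t - h ≤ 0),
        max_eq_right (by rw [sub_nonpos, le_div_iff₀ hh]; nlinarith)]
      ring
    · rw [max_eq_left (le_of_lt h1), max_eq_right (by linarith : x - t ≤ 0),
        max_eq_right (by linarith : x - t - h ≤ 0),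
        max_eq_left (by rw [sub_nonneg, div_le_one hh]; nlinarith)]
      field_simp
      ring
  · rw [abs_of_nonneg (by linarith)]
    rcases le_or_gt (x - t - h) 0 with h1 | h1
    · rw [max_eq_left (by linarith : 0 ≤ x - t + h), max_eq_left (by linarith : 0 ≤ x - t),
        max_eq_right h1,
        max_eq_left (by rw [sub_nonneg, div_le_one hh]; nlinarith)]
      field_simp
      ring
    · rw [max_eq_left (by linarith : 0 ≤ x - t + h), max_eq_left (by linarith : 0 ≤ x - t),
        max_eq_left (le_of_lt h1),
        max_eq_right (by rw [sub_nonpos, le_div_iff₀ hh]; nlinarith)]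
      field_simp
      ring

lemma hat_self (h t : ℝ) (hh : 0 < h) : hat h t t = 1 := by
  rw [hat_formula _ _ _ hh]; simp

lemma hat_le_one (h t x : ℝ) (hh : 0 < h) : hat h t x ≤ 1 := by
  rw [hat_formula _ _ _ hh]
  apply max_le _ zero_le_one
  have : 0 ≤ |x - t| / h := div_nonneg (abs_nonneg _) hh.le
  linarith

lemma hat_zero (h t x : ℝ) (hh : 0 < h) (hd : h ≤ |x - t|) : hat h t x = 0 := by
  rw [hat_formula _ _ _ hh, max_eq_right]
  rw [sub_nonpos, le_div_iff₀ hh]; linarith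

lemma hat_nonneg (h t x : ℝ) (hh : 0 < h) : 0 ≤ hat h t x := by
  rw [hat_formula _ _ _ hh]; exact le_max_right _ _

lemma hat_le_b (h t x b : ℝ) (hh : 0 < h) (hb : 1 ≤ b) (hd : (2 - b) * h ≤ |x - t|) :
    hat h t x ≤ b - 1 := by
  rw [hat_formula _ _ _ hh]
  apply max_le _ (by linarith)
  have : 2 - b ≤ |x - t| / h := by rw [le_div_iff₀ hh]; linarith
  linarith

/-- 2-D function-approximation network: exact interpolation on the
grid yet identically 0 away from the grid. -/
theorem stmt_8 (N : ℕ) (hN : 2 ≤ N)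
    (h : ℝ) (hh : h = 1 / ((N : ℝ) - 1))
    (x : ℕ → ℝ) (hx : ∀ i, x i = ((i : ℝ) - 1) * h)
    (z : ℕ → ℕ → ℝ) (b : ℝ) (hb : 1 ≤ b ∧ b < 2)
    (Φ : ℕ → ℕ → ℝ → ℝ → ℝ)
    (hΦ : ∀ i j s t, Φ i j s t = hat h (x i) s + hat h (x j) t)
    (f₂ : ℝ → ℝ → ℝ)
    (hf : ∀ s t, f₂ s t = ∑ i ∈ Finset.Icc 1 N, ∑ j ∈ Finset.Icc 1 N,
      z i j * (relu (Φ i j s t - b) / (2 - b))) :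
    (∀ i ∈ Finset.Icc 1 N, ∀ j ∈ Finset.Icc 1 N, f₂ (x i) (x j) = z i j) ∧
    (∀ s t : ℝ,
      (∀ i ∈ Finset.Icc 1 N, ∀ j ∈ Finset.Icc 1 N,
        (2 - b) * h ≤ max |s - x i| |t - x j|) →
      f₂ s t = 0) := by
  obtain ⟨hb1, hb2⟩ := hb
  have hN1 : (1 : ℝ) ≤ (N : ℝ) - 1 := by
    have : (2 : ℝ) ≤ (N : ℝ) := by exact_mod_cast hN
    linarith
  have hhpos : 0 < h := by rw [hh]; positivity
  -- distance between distinct grid points is at least h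
  have hgrid : ∀ i j : ℕ, i ≠ j → h ≤ |x i - x j| := by
    intro i j hij
    have : x i - x j = ((i : ℝ) - (j : ℝ)) * h := by rw [hx, hx]; ring
    rw [this, abs_mul, abs_of_pos hhpos]
    have h1 : (1 : ℝ) ≤ |(i : ℝ) - (j : ℝ)| := by
      have : ((i : ℝ) - (j : ℝ)) ≠ 0 := by
        intro hc
        exact hij (by exact_mod_cast sub_eq_zero.mp hc)
      rcases abs_cases ((i : ℝ) - (j : ℝ)) with ⟨he, _⟩ | ⟨he, _⟩ <;> rw [he]
      · have hpos : (0:ℝ) ≤ (i : ℝ) - (j : ℝ) := by rw [← he]; exact abs_nonneg _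
        have hlt : (j : ℝ) < (i : ℝ) := lt_of_le_of_ne (by linarith) (fun hc => this (by rw [hc]; ring))
        have hn : (j : ℕ) < i := by exact_mod_cast hlt
        have : (j : ℝ) + 1 ≤ (i : ℝ) := by exact_mod_cast hn
        linarith
      · have hpos : (0:ℝ) ≤ (j : ℝ) - (i : ℝ) := by
          have := abs_nonneg ((i : ℝ) - (j : ℝ)); linarith [le_abs_self ((i:ℝ)-(j:ℝ)), neg_abs_le ((i:ℝ)-(j:ℝ))]
        have hlt : (i : ℝ) < (j : ℝ) := lt_of_le_of_ne (by linarith) (fun hc => this (by rw [hc]; ring))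
        have hn : (i : ℕ) < j := by exact_mod_cast hlt
        have : (i : ℝ) + 1 ≤ (j : ℝ) := by exact_mod_cast hn
        linarith
    nlinarith
  -- a term vanishes when Φ ≤ b
  have hterm0 : ∀ i j s t, Φ i j s t ≤ b → relu (Φ i j s t - b) = 0 := by
    intro i j s t hle
    unfold relu
    rw [max_eq_right (by linarith)]
  constructor
  · intro i hi j hj
    rw [hf]
    rw [Finset.sum_eq_single i]
    · rw [Finset.sum_eq_single j]
      · rw [hΦ, hat_self _ _ hhpos, hat_self _ _ hhpos]
        unfold relu
        rw [max_eq_left (by linarith)]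
        rw [show (1:ℝ) + 1 - b = 2 - b by ring, div_self (by linarith), mul_one]
      · intro j' _ hj'
        rw [hterm0, mul_comm, zero_div, zero_mul]
        rw [hΦ, hat_self _ _ hhpos, hat_zero _ _ _ hhpos (hgrid j j' (Ne.symm hj'))]
        linarith
      · intro hc; exact absurd hj hc
    · intro i' _ hi'
      apply Finset.sum_eq_zero
      intro j' _
      rw [hterm0, mul_comm, zero_div, zero_mul]
      rw [hΦ]
      rw [hat_zero _ _ _ hhpos (hgrid i i' (Ne.symm hi'))]
      have := hat_le_one h (x j') (x j) hhpos
      linarith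
    · intro hc; exact absurd hi hc
  · intro s t hfar
    rw [hf]
    apply Finset.sum_eq_zero
    intro i hi
    apply Finset.sum_eq_zero
    intro j hj
    rw [hterm0, mul_comm, zero_div, zero_mul]
    rw [hΦ]
    rcases max_cases |s - x i| |t - x j| with ⟨he, _⟩ | ⟨he, _⟩
    · have h1 : hat h (x i) s ≤ b - 1 :=
        hat_le_b _ _ _ _ hhpos hb1 (by rw [← he]; exact hfar i hi j hj)
      have h2 := hat_le_one h (x j) t hhpos
      linarith
    · have h1 : hat h (x j) t ≤ b - 1 :=
        hat_le_b _ _ _ _ hhpos hb1 (by rw [← he]; exact hfar i hi j hj)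
      have h2 := hat_le_one h (x i) s hhpos
      linarith
end
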